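/- arXiv:1909.13339 — 3 statements merged into one kernel-verified Lean document; each statement's English description precedes it below -/
import Mathlib

section
/- (Donsker–Varadhan variational formula) For a probability measure π on a measurable space Θ and a bounded measurable function h : Θ → ℝ, we have log ∫ e^h dπ = sup over probability measures ρ ≪ π of [∫ h dρ − KL(ρ‖π)]. -/
/-!
Tilting `π` by `h` gives the probability measure `π_h ∝ e^h π`, and for every `ρ ≪ π` the
log-likelihood ratios satisfy `log dρ/dπ_h = log dρ/dπ - h + log ∫ e^h dπ`. Integrating against `ρ`,
`∫ h dρ - KL(ρ‖π) = log ∫ e^h dπ - KL(ρ‖π_h)`, so Gibbs' inequality `KL(ρ‖π_h) ≥ 0` gives the upper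
bound, with equality at `ρ = π_h`.
-/

open MeasureTheory

/-- Kullback–Leibler divergence `KL(ρ‖π) = ∫ log (dρ/dπ) dρ`. -/
noncomputable def klDiv' {α : Type*} [MeasurableSpace α] (ρ π : Measure α) : ℝ :=
  ∫ θ, Real.log ((ρ.rnDeriv π θ).toReal) ∂ρ

namespace MeasureTheory

open Real

variable {α : Type*} [MeasurableSpace α] {μ ν : Measure α} {f : α → ℝ}

lemma integral_llr_nonneg [IsProbabilityMeasure μ] [IsProbabilityMeasure ν] (hμν : μ ≪ ν)
    (h_int : Integrable (llr μ ν) μ) : 0 ≤ ∫ x, llr μ ν x ∂μ := by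
  simpa using InformationTheory.integral_llr_add_sub_measure_univ_nonneg hμν h_int

lemma integral_sub_integral_llr_le_log_integral_exp [IsProbabilityMeasure μ] [IsFiniteMeasure ν]
    [NeZero ν] (hμν : μ ≪ ν) (hfμ : Integrable f μ) (hfν : Integrable (fun x ↦ exp (f x)) ν)
    (h_int : Integrable (llr μ ν) μ) :
    ∫ x, f x ∂μ - ∫ x, llr μ ν x ∂μ ≤ log (∫ x, exp (f x) ∂ν) := by
  have : IsProbabilityMeasure (ν.tilted f) := isProbabilityMeasure_tilted hfν
  have h_gibbs : 0 ≤ ∫ x, llr μ (ν.tilted f) x ∂μ :=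
    integral_llr_nonneg (hμν.trans (absolutelyContinuous_tilted hfν))
      (integrable_llr_tilted_right hμν hfμ h_int hfν)
  rw [integral_llr_tilted_right hμν hfμ hfν h_int] at h_gibbs
  linarith

lemma llr_tilted_left_self [SigmaFinite ν] (hfν : Integrable (fun x ↦ exp (f x)) ν) :
    llr (ν.tilted f) ν =ᵐ[ν.tilted f] fun x ↦ f x - log (∫ x, exp (f x) ∂ν) :=
  (tilted_absolutelyContinuous ν f).ae_le (log_rnDeriv_tilted_left_self hfν)

lemma integrable_llr_tilted_left_self [IsFiniteMeasure ν] (hf : Integrable f (ν.tilted f))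
    (hfν : Integrable (fun x ↦ exp (f x)) ν) : Integrable (llr (ν.tilted f) ν) (ν.tilted f) := by
  rw [integrable_congr (llr_tilted_left_self hfν)]
  exact hf.sub (integrable_const _)

lemma integral_sub_integral_llr_tilted_left_self [IsFiniteMeasure ν] [NeZero ν]
    (hf : Integrable f (ν.tilted f)) (hfν : Integrable (fun x ↦ exp (f x)) ν) :
    ∫ x, f x ∂(ν.tilted f) - ∫ x, llr (ν.tilted f) ν x ∂(ν.tilted f)
      = log (∫ x, exp (f x) ∂ν) := by
  have : IsProbabilityMeasure (ν.tilted f) := isProbabilityMeasure_tilted hfν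
  rw [integral_congr_ae (llr_tilted_left_self hfν), integral_sub hf (integrable_const _)]
  simp

end MeasureTheory

/-- Donsker–Varadhan variational formula: for a probability measure `π` and a bounded
measurable `h`, `log ∫ e^h dπ = sup_{ρ ≪ π} [∫ h dρ − KL(ρ‖π)]`, the supremum being
over probability measures `ρ ≪ π` (with finite `KL(ρ‖π)`) and attained at
`ρ ∝ e^h·π`. -/
theorem stmt_9 {Θ : Type*} [MeasurableSpace Θ] (π : Measure Θ) [IsProbabilityMeasure π]
    (h : Θ → ℝ) (hmeas : Measurable h) (B : ℝ) (hbdd : ∀ θ, |h θ| ≤ B) :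
    (∀ ρ : Measure Θ, IsProbabilityMeasure ρ → ρ ≪ π →
        Integrable h ρ →
        Integrable (fun θ => Real.log ((ρ.rnDeriv π θ).toReal)) ρ →
        (∫ θ, h θ ∂ρ) - klDiv' ρ π ≤ Real.log (∫ θ, Real.exp (h θ) ∂π)) ∧
      (∃ ρ : Measure Θ, IsProbabilityMeasure ρ ∧ ρ ≪ π ∧
        Integrable h ρ ∧
        Integrable (fun θ => Real.log ((ρ.rnDeriv π θ).toReal)) ρ ∧
        (∫ θ, h θ ∂ρ) - klDiv' ρ π = Real.log (∫ θ, Real.exp (h θ) ∂π)) := by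
  have hexp : Integrable (fun θ ↦ Real.exp (h θ)) π := by
    simpa using ProbabilityTheory.integrable_exp_mul_of_le (μ := π) 1 B zero_le_one
      hmeas.aemeasurable (ae_of_all _ fun θ ↦ (abs_le.mp (hbdd θ)).2)
  have htilt : Integrable h (π.tilted h) :=
    .of_bound hmeas.aestronglyMeasurable B (ae_of_all _ hbdd)
  exact ⟨fun ρ _ hρπ hhρ hllr ↦ integral_sub_integral_llr_le_log_integral_exp hρπ hhρ hexp hllr,
    π.tilted h, isProbabilityMeasure_tilted hexp, tilted_absolutelyContinuous π h, htilt,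
    integrable_llr_tilted_left_self htilt hexp,
    integral_sub_integral_llr_tilted_left_self htilt hexp⟩
end

section
/- Let X₁,...,Xₙ be i.i.d. from P₀ and let D_k be the MMD for a kernel bounded by 1. Let π be a prior on Θ, β > 0, and π_n^β(dθ) ∝ exp(−β·D_k²(P_θ, P̂ₙ)) π(dθ). Suppose the prior mass condition holds: π({θ : D_k(P_θ, P_{θ*}) ≤ n^{−1/2}}) ≥ e^{−β/n}, where θ* minimizes D_k(P_θ, P₀). Then E[∫ D_k²(P_θ, P₀) π_n^β(dθ)] ≤ 8·inf_{θ∈Θ} D_k²(P_θ, P₀) + 16/n. -/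
open MeasureTheory ProbabilityTheory

/-- The Gibbs measure `π_β(dθ) ∝ exp(−β·L(θ))·π(dθ)`. -/
noncomputable def gibbs {Θ : Type*} [MeasurableSpace Θ] (π : Measure Θ) (β : ℝ)
    (L : Θ → ℝ) : Measure Θ :=
  (∫⁻ θ, ENNReal.ofReal (Real.exp (-β * L θ)) ∂π)⁻¹ •
    π.withDensity fun θ => ENNReal.ofReal (Real.exp (-β * L θ))

/-!
Write `L θ = D²(P_θ, P̂ₙ)` and `Z = ∫ exp (-β L) dπ`. Jensen's inequality for `x log x` (that is,
`KL(π_n^β ‖ π) ≥ 0`) gives `β ∫ L dπ_n^β ≤ -log Z`, while `Z ≥ π(A) e^{-βc}` for any set `A` on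
which `L ≤ c`. With `A` the ball of the prior mass condition, `c = (n^{-1/2} + D(P_{θ*}, P̂ₙ))²`,
so the posterior mean of `L` is at most `c + 1/n`. Two uses of `D(P,P')² ≤ 2D(P,Q)² + 2D(Q,P')²`
move from `P̂ₙ` to `P₀`, leaving `8 D²(P_{θ*}, P₀) + 6/n + 10 D²(P̂ₙ, P₀)`, and
`E D²(P̂ₙ, P₀) ≤ 1/n` because the cross terms of independent centred embeddings vanish.
-/

open scoped RealInnerProductSpace

section Gibbs

open Real

variable {α : Type*} [MeasurableSpace α] {μ : Measure α}

theorem log_integral_exp_le_integral_tilted [IsProbabilityMeasure μ] {f : α → ℝ}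
    (hf : Integrable (fun x ↦ exp (f x)) μ) (hff : Integrable (fun x ↦ exp (f x) * f x) μ) :
    log (∫ x, exp (f x) ∂μ) ≤ ∫ x, f x ∂μ.tilted f := by
  set Z := ∫ x, exp (f x) ∂μ
  have hZ : 0 < Z := integral_exp_pos hf
  have jensen : Z * log Z ≤ ∫ x, exp (f x) * f x ∂μ := by
    simpa only [log_exp] using Real.convexOn_mul_log.map_integral_le
      Real.continuous_mul_log.continuousOn isClosed_Ici
      (ae_of_all _ fun x ↦ (exp_pos (f x)).le) hf
      (by simpa only [Function.comp_def, log_exp] using hff)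
  rw [integral_tilted]
  simp_rw [smul_eq_mul, div_mul_eq_mul_div, integral_div]
  rw [le_div_iff₀ hZ]
  linarith

variable {β : ℝ} {L : α → ℝ}

theorem gibbs_eq_tilted [NeZero μ] (h : Integrable (fun x ↦ exp (-β * L x)) μ) :
    gibbs μ β L = μ.tilted fun x ↦ -β * L x := by
  have hZ := integral_exp_pos h
  rw [gibbs, Measure.tilted,
    ← ofReal_integral_eq_lintegral_ofReal h (ae_of_all _ fun _ ↦ (exp_pos _).le),
    ← withDensity_smul' _ _ (ENNReal.inv_ne_top.2 (ENNReal.ofReal_pos.2 hZ).ne')]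
  congr 1
  funext x
  rw [Pi.smul_apply, smul_eq_mul, ENNReal.ofReal_div_of_pos hZ, div_eq_mul_inv, mul_comm]

theorem integrable_exp_neg_mul_mul [IsFiniteMeasure μ] (hβ : 0 < β) (hL : Measurable L)
    (hL0 : ∀ x, 0 ≤ L x) : Integrable (fun x ↦ exp (-β * L x) * L x) μ := by
  refine Integrable.of_bound (C := exp (-1) / β) (by fun_prop) (ae_of_all _ fun x ↦ ?_)
  have h := mul_exp_neg_le_exp_neg_one (β * L x)
  rw [norm_of_nonneg (mul_nonneg (exp_pos _).le (hL0 x)), le_div_iff₀ hβ, neg_mul]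
  linarith

theorem integrable_exp_neg_mul [IsFiniteMeasure μ] (hβ : 0 ≤ β) (hL : Measurable L)
    (hL0 : ∀ x, 0 ≤ L x) : Integrable (fun x ↦ exp (-β * L x)) μ := by
  refine Integrable.of_bound (C := 1) (by fun_prop) (ae_of_all _ fun x ↦ ?_)
  rw [norm_of_nonneg (exp_pos _).le, exp_le_one_iff, neg_mul, neg_nonpos]
  exact mul_nonneg hβ (hL0 x)

variable [IsProbabilityMeasure μ]

theorem isProbabilityMeasure_gibbs (hβ : 0 ≤ β) (hL : Measurable L) (hL0 : ∀ x, 0 ≤ L x) :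
    IsProbabilityMeasure (gibbs μ β L) := by
  rw [gibbs_eq_tilted (integrable_exp_neg_mul hβ hL hL0)]
  exact isProbabilityMeasure_tilted (integrable_exp_neg_mul hβ hL hL0)

theorem integrable_gibbs (hβ : 0 < β) (hL : Measurable L) (hL0 : ∀ x, 0 ≤ L x) :
    Integrable L (gibbs μ β L) := by
  rw [gibbs_eq_tilted (integrable_exp_neg_mul hβ.le hL hL0),
    integrable_tilted_iff (integrable_exp_neg_mul hβ.le hL hL0)]
  exact integrable_exp_neg_mul_mul hβ hL hL0

theorem integral_gibbs_le (hβ : 0 < β) (hL : Measurable L) (hL0 : ∀ x, 0 ≤ L x)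
    {A : Set α} {c κ : ℝ} (hLA : ∀ x ∈ A, L x ≤ c) (hA : ENNReal.ofReal (exp (-κ)) ≤ μ A) :
    ∫ x, L x ∂gibbs μ β L ≤ c + κ / β := by
  have hexp := integrable_exp_neg_mul (μ := μ) hβ.le hL hL0
  have hmass : exp (-κ) ≤ μ.real A :=
    (ENNReal.ofReal_le_iff_le_toReal (measure_ne_top μ A)).1 hA
  have hpartition : exp (-β * c - κ) ≤ ∫ x, exp (-β * L x) ∂μ := calc
    exp (-β * c - κ) = exp (-β * c) * exp (-κ) := by rw [sub_eq_add_neg, exp_add]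
    _ ≤ exp (-β * c) * μ.real {x | exp (-β * c) ≤ exp (-β * L x)} := by
      refine mul_le_mul_of_nonneg_left (hmass.trans (measureReal_mono fun x hx ↦ ?_))
        (exp_pos _).le
      exact exp_le_exp.2 (by nlinarith [hLA x hx])
    _ ≤ ∫ x, exp (-β * L x) ∂μ :=
      mul_meas_ge_le_integral_of_nonneg (ae_of_all _ fun _ ↦ (exp_pos _).le) hexp _
  have hjensen := log_integral_exp_le_integral_tilted hexp
    ((integrable_exp_neg_mul_mul hβ hL hL0).const_mul (-β) |>.congr
      (ae_of_all _ fun x ↦ by ring))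
  rw [← gibbs_eq_tilted hexp, integral_const_mul] at hjensen
  have hfree := (log_le_log (exp_pos _) hpartition).trans hjensen
  rw [log_exp] at hfree
  rw [← sub_le_iff_le_add', le_div_iff₀ hβ]
  linarith

end Gibbs

section EmpiricalMean

variable {Ω α β H : Type*} [MeasurableSpace Ω] [MeasurableSpace α] [MeasurableSpace β]
  [NormedAddCommGroup H] {μ : Measure Ω}

theorem integrable_norm_smul_sum_sub_sq [NormedSpace ℝ H] [IsFiniteMeasure μ] {ι : Type*}
    [Fintype ι] {X : ι → Ω → α} (hX : ∀ i, Measurable (X i)) {Φ : α → H}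
    (hΦ : StronglyMeasurable Φ) {C : ℝ} (hΦC : ∀ x, ‖Φ x‖ ≤ C) (a : ℝ) (c : H) :
    Integrable (fun ω ↦ ‖a • ∑ i, Φ (X i ω) - c‖ ^ 2) μ := by
  have hsample : ∀ i, MemLp (fun ω ↦ Φ (X i ω)) 2 μ := fun i ↦
    MemLp.of_bound (hΦ.comp_measurable (hX i)).aestronglyMeasurable C (ae_of_all _ fun _ ↦ hΦC _)
  have hmean : MemLp (fun ω ↦ a • ∑ i, Φ (X i ω) - c) 2 μ :=
    ((memLp_finsetSum Finset.univ fun i _ ↦ hsample i).const_smul a).sub (memLp_const c)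
  exact hmean.integrable_norm_pow two_ne_zero

variable [InnerProductSpace ℝ H] [CompleteSpace H]

theorem IndepFun.integral_inner_comp_comp [IsFiniteMeasure μ] {X : Ω → α} {Y : Ω → β}
    (hXY : IndepFun X Y μ) (hX : Measurable X) (hY : Measurable Y) {f : α → H} {g : β → H}
    (hf : Integrable f (μ.map X)) (hg : Integrable g (μ.map Y)) :
    ∫ ω, ⟪f (X ω), g (Y ω)⟫ ∂μ = ⟪∫ ω, f (X ω) ∂μ, ∫ ω, g (Y ω) ∂μ⟫ := by
  have hlaw : μ.map (fun ω ↦ (X ω, Y ω)) = (μ.map X).prod (μ.map Y) :=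
    (indepFun_iff_map_prod_eq_prod_map_map hX.aemeasurable hY.aemeasurable).1 hXY
  have hint : Integrable (fun p : α × β ↦ ⟪f p.1, g p.2⟫) ((μ.map X).prod (μ.map Y)) :=
    hf.op_fst_snd continuous_inner ⟨1, by simpa using norm_inner_le_norm (𝕜 := ℝ)⟩ hg
  rw [← integral_map hX.aemeasurable hf.1, ← integral_map hY.aemeasurable hg.1,
    ← integral_map (f := fun p : α × β ↦ ⟪f p.1, g p.2⟫) (hX.prodMk hY).aemeasurable
      (hlaw ▸ hint.1), hlaw]
  exact integral_prod_bilin (innerSL ℝ) hf hg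

theorem integral_norm_sum_sq_of_iIndepFun [IsFiniteMeasure μ] {ι : Type*} [Fintype ι]
    {X : ι → Ω → α} (hX : ∀ i, Measurable (X i)) (hind : iIndepFun X μ) {g : α → H}
    (hg : StronglyMeasurable g) {C : ℝ} (hgC : ∀ x, ‖g x‖ ≤ C)
    (hmean : ∀ i, ∫ ω, g (X i ω) ∂μ = 0) :
    ∫ ω, ‖∑ i, g (X i ω)‖ ^ 2 ∂μ = ∑ i, ∫ ω, ‖g (X i ω)‖ ^ 2 ∂μ := by
  classical
  have hgi : ∀ i, Integrable g (μ.map (X i)) := fun _ ↦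
    Integrable.of_bound hg.aestronglyMeasurable C (ae_of_all _ hgC)
  have hinner : ∀ i j, Integrable (fun ω ↦ ⟪g (X i ω), g (X j ω)⟫) μ := fun i j ↦
    Integrable.of_bound
      ((hg.comp_measurable (hX i)).inner (hg.comp_measurable (hX j))).aestronglyMeasurable (C * C)
      (ae_of_all _ fun ω ↦ (norm_inner_le_norm _ _).trans
        (mul_le_mul (hgC _) (hgC _) (norm_nonneg _) ((norm_nonneg (g (X i ω))).trans (hgC _))))
  have horth : ∀ i j, i ≠ j → ∫ ω, ⟪g (X i ω), g (X j ω)⟫ ∂μ = 0 := fun i j hij ↦ by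
    rw [IndepFun.integral_inner_comp_comp (hind.indepFun hij) (hX i) (hX j) (hgi i) (hgi j),
      hmean, inner_zero_left]
  calc ∫ ω, ‖∑ i, g (X i ω)‖ ^ 2 ∂μ = ∫ ω, ∑ i, ∑ j, ⟪g (X i ω), g (X j ω)⟫ ∂μ := by
        simp_rw [← real_inner_self_eq_norm_sq, sum_inner, inner_sum]
    _ = ∑ i, ∑ j, ∫ ω, ⟪g (X i ω), g (X j ω)⟫ ∂μ := by
        rw [integral_finsetSum _ fun i _ ↦ integrable_finsetSum _ fun j _ ↦ hinner i j]
        simp_rw [integral_finsetSum _ fun j _ ↦ hinner _ j]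
    _ = ∑ i, ∫ ω, ‖g (X i ω)‖ ^ 2 ∂μ := by
        refine Finset.sum_congr rfl fun i _ ↦ ?_
        rw [Finset.sum_eq_single i (fun j _ hji ↦ horth i j hji.symm) (by simp)]
        simp_rw [real_inner_self_eq_norm_sq]

variable [IsProbabilityMeasure μ]

theorem integral_norm_sub_integral_sq {Z : Ω → H} (hZ : MemLp Z 2 μ) :
    ∫ ω, ‖Z ω - ∫ ω', Z ω' ∂μ‖ ^ 2 ∂μ = ∫ ω, ‖Z ω‖ ^ 2 ∂μ - ‖∫ ω, Z ω ∂μ‖ ^ 2 := by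
  set c := ∫ ω, Z ω ∂μ
  have hZ1 : Integrable Z μ := hZ.integrable one_le_two
  have hZ2 : Integrable (fun ω ↦ ‖Z ω‖ ^ 2) μ := hZ.integrable_norm_pow two_ne_zero
  have hcross : ∫ ω, ⟪Z ω, c⟫ ∂μ = ‖c‖ ^ 2 := by
    simp_rw [real_inner_comm c]
    rw [integral_inner hZ1, real_inner_self_eq_norm_sq]
  calc ∫ ω, ‖Z ω - c‖ ^ 2 ∂μ = ∫ ω, (‖Z ω‖ ^ 2 - 2 * ⟪Z ω, c⟫ + ‖c‖ ^ 2) ∂μ := by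
        simp_rw [norm_sub_sq_real]
    _ = ∫ ω, ‖Z ω‖ ^ 2 ∂μ - 2 * ∫ ω, ⟪Z ω, c⟫ ∂μ + ‖c‖ ^ 2 := by
        have hcross_int : Integrable (fun ω ↦ 2 * ⟪Z ω, c⟫) μ := (hZ1.inner_const c).const_mul 2
        rw [integral_add (f := fun ω ↦ ‖Z ω‖ ^ 2 - 2 * ⟪Z ω, c⟫) (hZ2.sub hcross_int)
          (integrable_const _), integral_sub hZ2 hcross_int,
          integral_const_mul]
        simp
    _ = ∫ ω, ‖Z ω‖ ^ 2 ∂μ - ‖c‖ ^ 2 := by rw [hcross]; ring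

theorem integral_norm_empiricalMean_sub_sq_le {n : ℕ} (hn : 0 < n) {X : Fin n → Ω → α}
    (hX : ∀ i, Measurable (X i)) (hind : iIndepFun X μ) {P0 : Measure α}
    (hlaw : ∀ i, μ.map (X i) = P0) {Φ : α → H} (hΦ : StronglyMeasurable Φ) {C : ℝ}
    (hΦC : ∀ x, ‖Φ x‖ ≤ C) :
    ∫ ω, ‖(n : ℝ)⁻¹ • ∑ i, Φ (X i ω) - ∫ x, Φ x ∂P0‖ ^ 2 ∂μ ≤ C ^ 2 / n := by
  have hmean : ∀ i, ∫ ω, Φ (X i ω) ∂μ = ∫ x, Φ x ∂P0 := fun i ↦ by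
    rw [← hlaw i, integral_map (hX i).aemeasurable hΦ.aestronglyMeasurable]
  set μ0 := ∫ x, Φ x ∂P0
  have hn' : (n : ℝ) ≠ 0 := by positivity
  have hmemLp : ∀ i, MemLp (fun ω ↦ Φ (X i ω)) 2 μ := fun i ↦
    MemLp.of_bound (hΦ.comp_measurable (hX i)).aestronglyMeasurable C (ae_of_all _ fun _ ↦ hΦC _)
  have hcentered : ∀ ω, (n : ℝ)⁻¹ • ∑ i, Φ (X i ω) - μ0 = (n : ℝ)⁻¹ • ∑ i, (Φ (X i ω) - μ0) := by
    intro ω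
    rw [Finset.sum_sub_distrib, smul_sub, Finset.sum_const, Finset.card_univ, Fintype.card_fin,
      ← Nat.cast_smul_eq_nsmul ℝ, smul_smul, inv_mul_cancel₀ hn', one_smul]
  have hvar : ∀ i, ∫ ω, ‖Φ (X i ω) - μ0‖ ^ 2 ∂μ ≤ C ^ 2 := by
    intro i
    have hbdd : ∀ ω, ‖Φ (X i ω)‖ ^ 2 ≤ C ^ 2 := fun ω ↦
      pow_le_pow_left₀ (norm_nonneg _) (hΦC _) 2
    have hsecond : ∫ ω, ‖Φ (X i ω)‖ ^ 2 ∂μ ≤ C ^ 2 := calc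
      _ ≤ ∫ _, C ^ 2 ∂μ := integral_mono_of_nonneg (ae_of_all _ fun _ ↦ by positivity)
        (integrable_const _) (ae_of_all _ hbdd)
      _ = C ^ 2 := by simp
    rw [← hmean i, integral_norm_sub_integral_sq (hmemLp i)]
    nlinarith [sq_nonneg ‖∫ ω, Φ (X i ω) ∂μ‖]
  calc ∫ ω, ‖(n : ℝ)⁻¹ • ∑ i, Φ (X i ω) - μ0‖ ^ 2 ∂μ
      = (n : ℝ)⁻¹ ^ 2 * ∫ ω, ‖∑ i, (Φ (X i ω) - μ0)‖ ^ 2 ∂μ := by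
        simp_rw [hcentered, norm_smul, mul_pow, norm_inv, RCLike.norm_natCast]
        exact integral_const_mul _ _
    _ = (n : ℝ)⁻¹ ^ 2 * ∑ i, ∫ ω, ‖Φ (X i ω) - μ0‖ ^ 2 ∂μ := by
        rw [integral_norm_sum_sq_of_iIndepFun (g := fun x ↦ Φ x - μ0) hX hind
          (hΦ.sub stronglyMeasurable_const) (fun x ↦ (norm_sub_le _ _).trans (add_le_add_left (hΦC x) _))
          fun i ↦ by
            rw [integral_sub ((hmemLp i).integrable one_le_two) (integrable_const _), hmean]
            simp]
    _ ≤ (n : ℝ)⁻¹ ^ 2 * (n * C ^ 2) := by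
        gcongr
        simpa using Finset.sum_le_sum fun i (_ : i ∈ Finset.univ) ↦ hvar i
    _ = C ^ 2 / n := by field_simp

end EmpiricalMean

section Posterior

variable {Θ H : Type*} [MeasurableSpace Θ] [SeminormedAddCommGroup H]

theorem norm_sub_sq_le_two_mul_add (a b c : H) :
    ‖a - c‖ ^ 2 ≤ 2 * ‖a - b‖ ^ 2 + 2 * ‖b - c‖ ^ 2 := calc
  ‖a - c‖ ^ 2 ≤ (‖a - b‖ + ‖b - c‖) ^ 2 :=
    pow_le_pow_left₀ (norm_nonneg _) (norm_sub_le_norm_sub_add_norm_sub a b c) 2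
  _ ≤ 2 * ‖a - b‖ ^ 2 + 2 * ‖b - c‖ ^ 2 := by linarith [add_sq_le (a := ‖a - b‖) (b := ‖b - c‖)]

theorem integral_gibbs_norm_sub_sq_le {π : Measure Θ} [IsProbabilityMeasure π] {β : ℝ}
    (hβ : 0 < β) {m : Θ → H} (hm : StronglyMeasurable m) (μ0 μh : H) {θs : Θ} {r κ : ℝ}
    (hmass : ENNReal.ofReal (Real.exp (-κ)) ≤ π {θ | ‖m θ - m θs‖ ≤ r}) :
    ∫ θ, ‖m θ - μ0‖ ^ 2 ∂gibbs π β (fun θ ↦ ‖m θ - μh‖ ^ 2)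
      ≤ 8 * ‖m θs - μ0‖ ^ 2 + 4 * r ^ 2 + 2 * (κ / β) + 10 * ‖μh - μ0‖ ^ 2 := by
  set L : Θ → ℝ := fun θ ↦ ‖m θ - μh‖ ^ 2
  have hL : Measurable L := (hm.sub stronglyMeasurable_const).norm.measurable.pow_const 2
  have hL0 : ∀ θ, 0 ≤ L θ := fun θ ↦ sq_nonneg _
  have := isProbabilityMeasure_gibbs (μ := π) hβ.le hL hL0
  have hball : ∀ θ ∈ {θ | ‖m θ - m θs‖ ≤ r}, L θ ≤ (r + ‖m θs - μh‖) ^ 2 := fun θ hθ ↦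
    pow_le_pow_left₀ (norm_nonneg _)
      ((norm_sub_le_norm_sub_add_norm_sub _ (m θs) _).trans (add_le_add_left hθ _)) 2
  have henergy := integral_gibbs_le hβ hL hL0 hball hmass
  have hLint := integrable_gibbs (μ := π) hβ hL hL0
  have hupper : Integrable (fun θ ↦ 2 * L θ + 2 * ‖μh - μ0‖ ^ 2) (gibbs π β L) :=
    (hLint.const_mul 2).add (integrable_const _)
  have hcenter := norm_sub_sq_le_two_mul_add (m θs) μ0 μh
  rw [norm_sub_rev μ0] at hcenter
  calc ∫ θ, ‖m θ - μ0‖ ^ 2 ∂gibbs π β L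
      ≤ ∫ θ, (2 * L θ + 2 * ‖μh - μ0‖ ^ 2) ∂gibbs π β L :=
        integral_mono_of_nonneg (ae_of_all _ fun θ ↦ sq_nonneg ‖m θ - μ0‖) hupper
          (ae_of_all _ fun θ ↦ norm_sub_sq_le_two_mul_add (m θ) μh μ0)
    _ = 2 * ∫ θ, L θ ∂gibbs π β L + 2 * ‖μh - μ0‖ ^ 2 := by
        rw [integral_add (hLint.const_mul 2) (integrable_const _),
          integral_const_mul]
        simp
    _ ≤ 8 * ‖m θs - μ0‖ ^ 2 + 4 * r ^ 2 + 2 * (κ / β) + 10 * ‖μh - μ0‖ ^ 2 := by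
        linarith [add_sq_le (a := r) (b := ‖m θs - μh‖)]

end Posterior

theorem stmt_10_general {𝕏 H Θ Ω : Type*} [MeasurableSpace 𝕏]
    [NormedAddCommGroup H] [InnerProductSpace ℝ H] [CompleteSpace H]
    [MeasurableSpace Θ] [MeasureSpace Ω] [IsProbabilityMeasure (ℙ : Measure Ω)]
    (Φ : 𝕏 → H) (hΦmeas : StronglyMeasurable Φ) (hΦbdd : ∀ x, ‖Φ x‖ ≤ 1)
    (m : Θ → H) (hmmeas : StronglyMeasurable m)
    (P0 : Measure 𝕏) (μ0 : H) (hμ0 : μ0 = ∫ x, Φ x ∂P0)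
    {n : ℕ} (hn : 0 < n) (X : Fin n → Ω → 𝕏) (hXmeas : ∀ i, Measurable (X i))
    (hiid : iIndepFun X ℙ)
    (hlaw : ∀ i, Measure.map (X i) ℙ = P0)
    (π : Measure Θ) [IsProbabilityMeasure π] (β : ℝ) (hβ : 0 < β)
    (θs : Θ) (hθs : ∀ θ, ‖m θs - μ0‖ ≤ ‖m θ - μ0‖)
    (hmass : ENNReal.ofReal (Real.exp (-β / n))
      ≤ π {θ | ‖m θ - m θs‖ ≤ 1 / Real.sqrt n}) :
    (∫ ω, ∫ θ, ‖m θ - μ0‖ ^ 2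
        ∂(gibbs π β fun θ => ‖m θ - (n : ℝ)⁻¹ • ∑ i, Φ (X i ω)‖ ^ 2) ∂ℙ)
      ≤ 8 * (⨅ θ, ‖m θ - μ0‖ ^ 2) + 16 / n := by
  have : Nonempty Θ := ⟨θs⟩
  have hn' : (0 : ℝ) < n := Nat.cast_pos.2 hn
  set e : Ω → ℝ := fun ω ↦ ‖(n : ℝ)⁻¹ • ∑ i, Φ (X i ω) - μ0‖ ^ 2
  have hconst : 4 * (1 / Real.sqrt n) ^ 2 + 2 * (β / n / β) = 6 / n := by
    rw [div_pow, Real.sq_sqrt hn'.le]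
    field_simp
    ring
  have hposterior : ∀ ω, ∫ θ, ‖m θ - μ0‖ ^ 2
      ∂(gibbs π β fun θ => ‖m θ - (n : ℝ)⁻¹ • ∑ i, Φ (X i ω)‖ ^ 2)
        ≤ 8 * ‖m θs - μ0‖ ^ 2 + 6 / n + 10 * e ω := fun ω ↦
    (integral_gibbs_norm_sub_sq_le hβ hmmeas μ0 _ (by rwa [neg_div] at hmass)).trans_eq
      (by rw [← hconst]; ring)
  have he : Integrable e ℙ := integrable_norm_smul_sum_sub_sq hXmeas hΦmeas hΦbdd _ μ0
  have hempirical : ∫ ω, e ω ∂ℙ ≤ 1 / n := by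
    simpa [← hμ0] using integral_norm_empiricalMean_sub_sq_le hn hXmeas hiid hlaw hΦmeas hΦbdd
  have hinf : ‖m θs - μ0‖ ^ 2 ≤ ⨅ θ, ‖m θ - μ0‖ ^ 2 :=
    le_ciInf fun θ ↦ pow_le_pow_left₀ (norm_nonneg _) (hθs θ) 2
  have hupper : Integrable (fun ω ↦ 8 * ‖m θs - μ0‖ ^ 2 + 6 / n + 10 * e ω) ℙ :=
    (integrable_const _).add (he.const_mul 10)
  calc _ ≤ ∫ ω, (8 * ‖m θs - μ0‖ ^ 2 + 6 / n + 10 * e ω) ∂ℙ :=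
        integral_mono_of_nonneg (ae_of_all _ fun _ ↦ integral_nonneg fun θ ↦ sq_nonneg ‖m θ - μ0‖)
          hupper (ae_of_all _ hposterior)
    _ = 8 * ‖m θs - μ0‖ ^ 2 + 6 / n + 10 * ∫ ω, e ω ∂ℙ := by
        rw [integral_add (integrable_const _) (he.const_mul 10), integral_const_mul]
        simp
    _ ≤ 8 * (⨅ θ, ‖m θ - μ0‖ ^ 2) + 16 / n := by
        have : 6 / (n : ℝ) + 10 * (1 / n) = 16 / n := by ring
        linarith

/-- Robust generalization bound for the MMD-Bayes posterior.  The MMD is expressed via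
the kernel mean embedding: `Φ` is the feature map of a kernel bounded by 1,
`m θ = μ_{P_θ}`, `μ0 = μ_{P₀}`, and the embedding of the empirical measure of the
i.i.d. sample `X₁,…,Xₙ ∼ P₀` is `(1/n)∑ᵢ Φ(Xᵢ)`.  Under the prior mass condition
`π{θ : D_k(P_θ,P_{θ*}) ≤ n^{-1/2}} ≥ e^{−β/n}`, where `θ*` minimizes
`D_k(P_θ,P₀)`, the expected posterior risk satisfies
`E[∫ D_k²(P_θ,P₀) π_n^β(dθ)] ≤ 8 inf_θ D_k²(P_θ,P₀) + 16/n`. -/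
theorem stmt_10 {𝕏 H Θ Ω : Type*} [MeasurableSpace 𝕏]
    [NormedAddCommGroup H] [InnerProductSpace ℝ H] [CompleteSpace H]
    [MeasurableSpace Θ] [MeasureSpace Ω] [IsProbabilityMeasure (ℙ : Measure Ω)]
    (Φ : 𝕏 → H) (hΦmeas : StronglyMeasurable Φ) (hΦbdd : ∀ x, ‖Φ x‖ ≤ 1)
    (P : Θ → Measure 𝕏) (hP : ∀ θ, IsProbabilityMeasure (P θ))
    (m : Θ → H) (hm : ∀ θ, m θ = ∫ x, Φ x ∂(P θ)) (hmmeas : StronglyMeasurable m)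
    (P0 : Measure 𝕏) [IsProbabilityMeasure P0] (μ0 : H) (hμ0 : μ0 = ∫ x, Φ x ∂P0)
    {n : ℕ} (hn : 0 < n) (X : Fin n → Ω → 𝕏) (hXmeas : ∀ i, Measurable (X i))
    (hiid : iIndepFun X ℙ)
    (hlaw : ∀ i, Measure.map (X i) ℙ = P0)
    (π : Measure Θ) [IsProbabilityMeasure π] (β : ℝ) (hβ : 0 < β)
    (θs : Θ) (hθs : ∀ θ, ‖m θs - μ0‖ ≤ ‖m θ - μ0‖)
    (hmass : ENNReal.ofReal (Real.exp (-β / n))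
      ≤ π {θ | ‖m θ - m θs‖ ≤ 1 / Real.sqrt n}) :
    (∫ ω, ∫ θ, ‖m θ - μ0‖ ^ 2
        ∂(gibbs π β fun θ => ‖m θ - (n : ℝ)⁻¹ • ∑ i, Φ (X i ω)‖ ^ 2) ∂ℙ)
      ≤ 8 * (⨅ θ, ‖m θ - μ0‖ ^ 2) + 16 / n :=
  stmt_10_general Φ hΦmeas hΦbdd m hmmeas P0 μ0 hμ0 hn X hXmeas hiid hlaw π β hβ θs hθs hmass
end

section
/- Let π̃_n^β be the variational approximation of the MMD-Bayes posterior over a family ℱ. Suppose there exists ρₙ ∈ ℱ with ∫ D_k²(P_θ,P_{θ*}) ρₙ(dθ) ≤ 1/n and KL(ρₙ‖π) ≤ β/n, where θ* = argmin_θ D_k(P_θ,P₀). Then E[∫ D_k²(P_θ,P₀) π̃_n^β(dθ)] ≤ 8·inf_{θ∈Θ} D_k²(P_θ,P₀) + 16/n. -/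
open MeasureTheory ProbabilityTheory

/-!
Expanding the Gibbs density gives `KL(ρ‖π_n^β) = KL(ρ‖π) + β ∫ ‖m θ - μ̂‖² dρ + const`, so
by Gibbs' inequality the variational minimiser has empirical risk `∫ ‖m θ - μ̂‖²` at most that
of `ρₙ` plus `KL(ρₙ‖π)/β ≤ 1/n`. Three uses of `‖a - c‖² ≤ 2‖a - b‖² + 2‖b - c‖²` pass from
`μ̂` to `μ₀` and from `ρₙ` to `θ*`, giving `6/n + 8 ‖m θ* - μ₀‖² + 10 ‖μ̂ - μ₀‖²` for every
sample. Finally `E ‖μ̂ - μ₀‖² ≤ 1/n`: the centred features `Φ(Xᵢ) - μ₀` are independent with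
mean zero, so the cross terms of the expanded square vanish.
-/

section Gibbs

variable {Θ : Type*} [MeasurableSpace Θ] {π ρ ρ' : Measure Θ} {β : ℝ} {L : Θ → ℝ}

lemma klDiv'_eq_integral_llr : klDiv' ρ π = ∫ θ, llr ρ π θ ∂ρ := rfl

lemma klDiv'_nonneg [IsProbabilityMeasure ρ] [IsProbabilityMeasure π] (hρ : ρ ≪ π)
    (hllr : Integrable (llr ρ π) ρ) : 0 ≤ klDiv' ρ π := by
  simpa [klDiv'_eq_integral_llr] using
    InformationTheory.integral_llr_add_sub_measure_univ_nonneg hρ hllr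

lemma gibbs_eq_tilted_s14 [NeZero π] (hexp : Integrable (fun θ => Real.exp (-β * L θ)) π) :
    gibbs π β L = π.tilted fun θ => -β * L θ := by
  have hZ : 0 < ∫ θ, Real.exp (-β * L θ) ∂π := integral_exp_pos hexp
  rw [gibbs, Measure.tilted, ← ofReal_integral_eq_lintegral_ofReal hexp
    (ae_of_all _ fun _ => (Real.exp_pos _).le),
    ← withDensity_smul' _ _ (ENNReal.inv_ne_top.2 (ENNReal.ofReal_pos.2 hZ).ne')]
  congr with θ
  rw [Pi.smul_apply, smul_eq_mul, ENNReal.ofReal_div_of_pos hZ, div_eq_mul_inv, mul_comm]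

lemma klDiv'_gibbs [IsProbabilityMeasure ρ] [IsFiniteMeasure π] (hρ : ρ ≪ π)
    (hllr : Integrable (llr ρ π) ρ) (hL : Integrable L ρ)
    (hexp : Integrable (fun θ => Real.exp (-β * L θ)) π) :
    klDiv' ρ (gibbs π β L) =
      klDiv' ρ π + β * ∫ θ, L θ ∂ρ + Real.log (∫ θ, Real.exp (-β * L θ) ∂π) := by
  have : NeZero π := ⟨fun h => IsProbabilityMeasure.ne_zero ρ (by simpa [h] using hρ)⟩
  rw [gibbs_eq_tilted_s14 hexp, klDiv'_eq_integral_llr, klDiv'_eq_integral_llr,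
    integral_llr_tilted_right hρ (hL.const_mul (-β)) hexp hllr, integral_const_mul]
  ring

lemma integral_le_of_klDiv'_gibbs_le [IsProbabilityMeasure π] [IsProbabilityMeasure ρ]
    [IsProbabilityMeasure ρ'] (hβ : 0 < β) (hLm : AEStronglyMeasurable L π)
    (hL0 : ∀ θ, 0 ≤ L θ) (hρ : ρ ≪ π) (hρ' : ρ' ≪ π) (hllr : Integrable (llr ρ π) ρ)
    (hllr' : Integrable (llr ρ' π) ρ') (hL : Integrable L ρ) (hL' : Integrable L ρ')
    (hmin : klDiv' ρ (gibbs π β L) ≤ klDiv' ρ' (gibbs π β L)) :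
    ∫ θ, L θ ∂ρ ≤ ∫ θ, L θ ∂ρ' + klDiv' ρ' π / β := by
  have hexp : Integrable (fun θ => Real.exp (-β * L θ)) π :=
    .of_bound (by fun_prop) 1 (ae_of_all _ fun θ => by
      simpa [abs_of_pos (Real.exp_pos _)] using mul_nonneg hβ.le (hL0 θ))
  rw [klDiv'_gibbs hρ hllr hL hexp, klDiv'_gibbs hρ' hllr' hL' hexp] at hmin
  have hKL := klDiv'_nonneg hρ hllr
  have : β * (∫ θ, L θ ∂ρ - ∫ θ, L θ ∂ρ') ≤ klDiv' ρ' π := by linarith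
  linarith [(le_div_iff₀' hβ).2 this]

end Gibbs

section MeanEmbedding

variable {H Θ : Type*} [NormedAddCommGroup H] [MeasurableSpace Θ] {m : Θ → H}

lemma norm_sub_sq_le_two_mul (a b c : H) :
    ‖a - c‖ ^ 2 ≤ 2 * (‖a - b‖ ^ 2 + ‖b - c‖ ^ 2) :=
  (pow_le_pow_left₀ (norm_nonneg _) (norm_sub_le_norm_sub_add_norm_sub a b c) 2).trans
    add_sq_le

lemma integrable_norm_sub_sq {ρ : Measure Θ} [IsFiniteMeasure ρ] (hm : StronglyMeasurable m)
    {R : ℝ} (hm_bdd : ∀ θ, ‖m θ‖ ≤ R) (v : H) :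
    Integrable (fun θ => ‖m θ - v‖ ^ 2) ρ :=
  .of_bound (by fun_prop) ((R + ‖v‖) ^ 2) (ae_of_all _ fun θ => by
    rw [Real.norm_of_nonneg (by positivity)]
    exact pow_le_pow_left₀ (norm_nonneg _)
      ((norm_sub_le _ _).trans (by gcongr; exact hm_bdd θ)) 2)

lemma integral_norm_sub_sq_le {ρ : Measure Θ} [IsProbabilityMeasure ρ] {a : H}
    (ha : Integrable (fun θ => ‖m θ - a‖ ^ 2) ρ) (b : H) :
    ∫ θ, ‖m θ - b‖ ^ 2 ∂ρ ≤ 2 * (∫ θ, ‖m θ - a‖ ^ 2 ∂ρ + ‖a - b‖ ^ 2) := by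
  calc ∫ θ, ‖m θ - b‖ ^ 2 ∂ρ ≤ ∫ θ, 2 * (‖m θ - a‖ ^ 2 + ‖a - b‖ ^ 2) ∂ρ :=
        integral_mono_of_nonneg (ae_of_all _ fun _ => by positivity)
          ((ha.add (integrable_const _)).const_mul 2)
          (ae_of_all _ fun θ => norm_sub_sq_le_two_mul _ a _)
    _ = 2 * (∫ θ, ‖m θ - a‖ ^ 2 ∂ρ + ‖a - b‖ ^ 2) := by
        rw [integral_const_mul, integral_add ha (integrable_const _), integral_const,
          probReal_univ, one_smul]

lemma norm_inv_natCast_smul_sum_le {E : Type*} [NormedAddCommGroup E] [NormedSpace ℝ E]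
    {n : ℕ} (hn : 0 < n) {v : Fin n → E} {C : ℝ} (hv : ∀ i, ‖v i‖ ≤ C) :
    ‖(n : ℝ)⁻¹ • ∑ i, v i‖ ≤ C := by
  rw [norm_smul, norm_inv, Real.norm_natCast, inv_mul_le_iff₀ (Nat.cast_pos.2 hn)]
  simpa using norm_sum_le_of_le Finset.univ fun i _ => hv i

lemma integral_norm_sub_sq_le_of_klDiv'_gibbs_le (hm : StronglyMeasurable m) {R : ℝ}
    (hm_bdd : ∀ θ, ‖m θ‖ ≤ R) {π ρ ρ' : Measure Θ} [IsProbabilityMeasure π]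
    [IsProbabilityMeasure ρ] [IsProbabilityMeasure ρ'] {β : ℝ} (hβ : 0 < β)
    (hρ : ρ ≪ π) (hρ' : ρ' ≪ π) (hllr : Integrable (llr ρ π) ρ)
    (hllr' : Integrable (llr ρ' π) ρ') {μhat : H}
    (hmin : klDiv' ρ (gibbs π β fun θ => ‖m θ - μhat‖ ^ 2)
      ≤ klDiv' ρ' (gibbs π β fun θ => ‖m θ - μhat‖ ^ 2)) (μ0 : H) (θs : Θ) :
    ∫ θ, ‖m θ - μ0‖ ^ 2 ∂ρ ≤ 4 * ∫ θ, ‖m θ - m θs‖ ^ 2 ∂ρ' + 2 * (klDiv' ρ' π / β)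
      + 8 * ‖m θs - μ0‖ ^ 2 + 10 * ‖μhat - μ0‖ ^ 2 := by
  have horacle := integral_le_of_klDiv'_gibbs_le hβ (by fun_prop) (fun _ => by positivity)
    hρ hρ' hllr hllr' (integrable_norm_sub_sq hm hm_bdd μhat)
    (integrable_norm_sub_sq hm hm_bdd μhat) hmin
  have hρ_split := integral_norm_sub_sq_le (integrable_norm_sub_sq (ρ := ρ) hm hm_bdd μhat) μ0
  have hρ'_split :=
    integral_norm_sub_sq_le (integrable_norm_sub_sq (ρ := ρ') hm hm_bdd (m θs)) μhat
  have hθs_split := norm_sub_sq_le_two_mul (m θs) μ0 μhat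
  rw [norm_sub_rev μ0] at hθs_split
  linarith

end MeanEmbedding

section Concentration

open scoped InnerProductSpace

variable {Ω 𝓧 H : Type*} [MeasurableSpace Ω] {μ : Measure Ω} [MeasurableSpace 𝓧]
  [NormedAddCommGroup H] [InnerProductSpace ℝ H] [CompleteSpace H]

lemma integral_le_const_add_mul_integral [IsProbabilityMeasure μ] {Y e : Ω → ℝ}
    (hY : ∀ ω, 0 ≤ Y ω) (he : Integrable e μ) {a c : ℝ} (h : ∀ ω, Y ω ≤ a + c * e ω) :
    ∫ ω, Y ω ∂μ ≤ a + c * ∫ ω, e ω ∂μ := by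
  calc ∫ ω, Y ω ∂μ ≤ ∫ ω, (a + c * e ω) ∂μ :=
        integral_mono_of_nonneg (ae_of_all _ hY) ((integrable_const a).add (he.const_mul c))
          (ae_of_all _ h)
    _ = a + c * ∫ ω, e ω ∂μ := by
        rw [integral_add (integrable_const a) (he.const_mul c), integral_const,
          integral_const_mul, probReal_univ, one_smul]

lemma integral_norm_sub_integral_sq_s14 {P : Measure 𝓧} [IsProbabilityMeasure P] {f : 𝓧 → H}
    (hf : Integrable f P) (hf2 : Integrable (fun x => ‖f x‖ ^ 2) P) :
    ∫ x, ‖f x - ∫ y, f y ∂P‖ ^ 2 ∂P = ∫ x, ‖f x‖ ^ 2 ∂P - ‖∫ x, f x ∂P‖ ^ 2 := by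
  set a := ∫ y, f y ∂P
  have hinner : Integrable (fun x => 2 * ⟪a, f x⟫_ℝ) P := (hf.const_inner a).const_mul 2
  have hsub : Integrable (fun x => ‖f x‖ ^ 2 - 2 * ⟪a, f x⟫_ℝ) P := hf2.sub hinner
  simp_rw [norm_sub_sq_real, real_inner_comm a]
  rw [integral_add hsub (integrable_const _), integral_sub hf2 hinner, integral_const_mul,
    integral_inner hf, integral_const, probReal_univ, one_smul, real_inner_self_eq_norm_sq]
  ring

lemma integral_norm_sum_sq_of_iIndepFun_s14 [IsProbabilityMeasure μ] {ι : Type*} [Fintype ι]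
    {X : ι → Ω → 𝓧} (hX : ∀ i, AEMeasurable (X i) μ) (hind : iIndepFun X μ)
    {P : Measure 𝓧} [IsFiniteMeasure P] (hlaw : ∀ i, μ.map (X i) = P) {f : 𝓧 → H}
    (hf : AEStronglyMeasurable f P) {C : ℝ} (hf_bdd : ∀ x, ‖f x‖ ≤ C)
    (hf0 : ∫ x, f x ∂P = 0) :
    ∫ ω, ‖∑ i, f (X i ω)‖ ^ 2 ∂μ = Fintype.card ι * ∫ x, ‖f x‖ ^ 2 ∂P := by
  have hfP : Integrable f P := .of_bound hf C (ae_of_all _ hf_bdd)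
  have hfX : ∀ i, AEStronglyMeasurable (fun ω => f (X i ω)) μ := fun i =>
    (hlaw i ▸ hf).comp_aemeasurable (hX i)
  have hmean : ∀ i, ∫ ω, f (X i ω) ∂μ = 0 := fun i => by
    rw [← integral_map (hX i) (hlaw i ▸ hf), hlaw i, hf0]
  have hint : ∀ i j, Integrable (fun ω => ⟪f (X i ω), f (X j ω)⟫_ℝ) μ := fun i j =>
    .of_bound ((hfX i).inner (hfX j)) (C * C) (ae_of_all _ fun ω =>
      (norm_inner_le_norm _ _).trans (mul_le_mul (hf_bdd _) (hf_bdd _) (norm_nonneg _)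
        ((norm_nonneg _).trans (hf_bdd (X i ω)))))
  have hcross : ∀ i j, i ≠ j → ∫ ω, ⟪f (X i ω), f (X j ω)⟫_ℝ ∂μ = 0 := fun i j hij => by
    have := (hind.indepFun hij).integral_bilin_comp_comp (hX i) (hX j)
      ((hlaw i).symm ▸ hfP) ((hlaw j).symm ▸ hfP) (innerSL ℝ)
    rwa [hmean, hmean, map_zero] at this
  have hdiag : ∀ i, ∫ ω, ⟪f (X i ω), f (X i ω)⟫_ℝ ∂μ = ∫ x, ‖f x‖ ^ 2 ∂P := fun i => by
    simp_rw [real_inner_self_eq_norm_sq]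
    rw [← hlaw i, integral_map (hX i) (by rw [hlaw i]; fun_prop)]
  simp_rw [← real_inner_self_eq_norm_sq, sum_inner, inner_sum]
  rw [integral_finsetSum _ fun i _ => integrable_finsetSum _ fun j _ => hint i j]
  simp_rw [integral_finsetSum _ fun j _ => hint _ j]
  rw [Finset.sum_congr rfl fun i _ => Finset.sum_eq_single i (fun j _ hji => hcross i j hji.symm)
    (by simp), Finset.sum_congr rfl fun i _ => hdiag i]
  simp

lemma integral_norm_inv_smul_sum_sub_sq_le [IsProbabilityMeasure μ] {n : ℕ} (hn : 0 < n)
    {X : Fin n → Ω → 𝓧} (hX : ∀ i, AEMeasurable (X i) μ) (hind : iIndepFun X μ)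
    {P : Measure 𝓧} [IsProbabilityMeasure P] (hlaw : ∀ i, μ.map (X i) = P) {Φ : 𝓧 → H}
    (hΦ : AEStronglyMeasurable Φ P) {C : ℝ} (hΦ_bdd : ∀ x, ‖Φ x‖ ≤ C) :
    ∫ ω, ‖(n : ℝ)⁻¹ • ∑ i, Φ (X i ω) - ∫ x, Φ x ∂P‖ ^ 2 ∂μ ≤ C ^ 2 / n := by
  set μ0 := ∫ x, Φ x ∂P
  have hn' : (0 : ℝ) < n := Nat.cast_pos.2 hn
  have hΦP : Integrable Φ P := .of_bound hΦ C (ae_of_all _ hΦ_bdd)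
  have hΦ2 : Integrable (fun x => ‖Φ x‖ ^ 2) P :=
    .of_bound (by fun_prop) (C ^ 2) (ae_of_all _ fun x => by
      rw [Real.norm_of_nonneg (by positivity)]
      exact pow_le_pow_left₀ (norm_nonneg _) (hΦ_bdd x) 2)
  have hμ0 : ‖μ0‖ ≤ C := by
    simpa using norm_integral_le_of_norm_le_const (μ := P) (ae_of_all _ hΦ_bdd)
  have hcentered : ∫ x, (Φ x - μ0) ∂P = 0 := by
    rw [integral_sub hΦP (integrable_const _), integral_const, probReal_univ, one_smul, sub_self]
  have hrescale : ∀ ω, ‖(n : ℝ)⁻¹ • ∑ i, Φ (X i ω) - μ0‖ ^ 2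
      = ((n : ℝ)⁻¹) ^ 2 * ‖∑ i, (Φ (X i ω) - μ0)‖ ^ 2 := fun ω => by
    have hcenter : (n : ℝ)⁻¹ • ∑ i, (Φ (X i ω) - μ0) = (n : ℝ)⁻¹ • ∑ i, Φ (X i ω) - μ0 := by
      rw [Finset.sum_sub_distrib, smul_sub, Finset.sum_const, Finset.card_univ,
        Fintype.card_fin, ← Nat.cast_smul_eq_nsmul ℝ, smul_smul, inv_mul_cancel₀ hn'.ne',
        one_smul]
    rw [← hcenter, norm_smul, mul_pow, Real.norm_of_nonneg (by positivity)]
  have hsecond : ∫ x, ‖Φ x‖ ^ 2 ∂P ≤ C ^ 2 := by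
    simpa using integral_mono hΦ2 (integrable_const (C ^ 2))
      fun x => pow_le_pow_left₀ (norm_nonneg _) (hΦ_bdd x) 2
  simp_rw [hrescale]
  rw [integral_const_mul, integral_norm_sum_sq_of_iIndepFun_s14 hX hind hlaw (by fun_prop)
    (fun x => (norm_sub_le _ _).trans (add_le_add (hΦ_bdd x) hμ0)) hcentered,
    integral_norm_sub_integral_sq_s14 hΦP hΦ2, Fintype.card_fin]
  calc ((n : ℝ)⁻¹) ^ 2 * (n * (∫ x, ‖Φ x‖ ^ 2 ∂P - ‖μ0‖ ^ 2))
      = (∫ x, ‖Φ x‖ ^ 2 ∂P - ‖μ0‖ ^ 2) / n := by field_simp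
    _ ≤ C ^ 2 / n := by gcongr; nlinarith [sq_nonneg ‖μ0‖]

end Concentration

/-- Robust generalization bound for the variational approximation `π̃_n^β` of the
MMD-Bayes posterior: `π̃_n^β` minimizes `ρ ↦ KL(ρ‖π_n^β)` over a variational family
`ℱ`.  The MMD is expressed via the kernel mean embedding: `Φ` is the feature map of
a kernel bounded by 1, `m θ = μ_{P_θ}`, `μ0 = μ_{P₀}`, and the empirical embedding
of the i.i.d. sample `X₁,…,Xₙ ∼ P₀` is `(1/n)∑ᵢ Φ(Xᵢ)`.  Under the extended prior
mass condition (existence of `ρₙ ∈ ℱ` with `∫ D_k²(P_θ,P_{θ*}) dρₙ ≤ 1/n` and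
`KL(ρₙ‖π) ≤ β/n`, where `θ*` minimizes `D_k(P_θ,P₀)`),
`E[∫ D_k²(P_θ,P₀) π̃_n^β(dθ)] ≤ 8 inf_θ D_k²(P_θ,P₀) + 16/n`. -/
theorem stmt_14 {𝕏 H Θ Ω : Type*} [MeasurableSpace 𝕏]
    [NormedAddCommGroup H] [InnerProductSpace ℝ H] [CompleteSpace H]
    [MeasurableSpace Θ] [MeasureSpace Ω] [IsProbabilityMeasure (ℙ : Measure Ω)]
    (Φ : 𝕏 → H) (hΦmeas : StronglyMeasurable Φ) (hΦbdd : ∀ x, ‖Φ x‖ ≤ 1)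
    (P : Θ → Measure 𝕏) (hP : ∀ θ, IsProbabilityMeasure (P θ))
    (m : Θ → H) (hm : ∀ θ, m θ = ∫ x, Φ x ∂(P θ)) (hmmeas : StronglyMeasurable m)
    (P0 : Measure 𝕏) [IsProbabilityMeasure P0] (μ0 : H) (hμ0 : μ0 = ∫ x, Φ x ∂P0)
    {n : ℕ} (hn : 0 < n) (X : Fin n → Ω → 𝕏) (hXmeas : ∀ i, Measurable (X i))
    (hiid : iIndepFun X ℙ)
    (hlaw : ∀ i, Measure.map (X i) ℙ = P0)
    (π : Measure Θ) [IsProbabilityMeasure π] (β : ℝ) (hβ : 0 < β)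
    (θs : Θ) (hθs : ∀ θ, ‖m θs - μ0‖ ≤ ‖m θ - μ0‖)
    -- the variational family and its regularity
    (F : Set (Measure Θ))
    (hF : ∀ ρ ∈ F, IsProbabilityMeasure ρ ∧ ρ ≪ π ∧
      Integrable (fun θ => Real.log ((ρ.rnDeriv π θ).toReal)) ρ)
    -- the variational approximation: for each sample, the KL-closest member of ℱ
    (ρtilde : Ω → Measure Θ) (hρtildeF : ∀ ω, ρtilde ω ∈ F)
    (hρtilde : ∀ ω, ∀ ρ ∈ F,
      klDiv' (ρtilde ω) (gibbs π β fun θ => ‖m θ - (n : ℝ)⁻¹ • ∑ i, Φ (X i ω)‖ ^ 2)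
        ≤ klDiv' ρ (gibbs π β fun θ => ‖m θ - (n : ℝ)⁻¹ • ∑ i, Φ (X i ω)‖ ^ 2))
    -- extended prior mass condition
    (ρn : Measure Θ) (hρnF : ρn ∈ F)
    (hρn1 : (∫ θ, ‖m θ - m θs‖ ^ 2 ∂ρn) ≤ 1 / n)
    (hρn2 : klDiv' ρn π ≤ β / n) :
    (∫ ω, ∫ θ, ‖m θ - μ0‖ ^ 2 ∂(ρtilde ω) ∂ℙ)
      ≤ 8 * (⨅ θ, ‖m θ - μ0‖ ^ 2) + 16 / n := by
  have hm_bdd : ∀ θ, ‖m θ‖ ≤ 1 := fun θ => by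
    simpa [hm θ] using norm_integral_le_of_norm_le_const (μ := P θ) (ae_of_all _ hΦbdd)
  set μhat : Ω → H := fun ω => (n : ℝ)⁻¹ • ∑ i, Φ (X i ω)
  obtain ⟨hρn_prob, hρn_ac, hρn_llr⟩ := hF ρn hρnF
  have hKL : klDiv' ρn π / β ≤ 1 / n := by
    rwa [div_le_iff₀ hβ, div_mul_eq_mul_div, one_mul]
  have hpointwise : ∀ ω, ∫ θ, ‖m θ - μ0‖ ^ 2 ∂(ρtilde ω)
      ≤ 6 / n + 8 * ‖m θs - μ0‖ ^ 2 + 10 * ‖μhat ω - μ0‖ ^ 2 := fun ω => by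
    obtain ⟨hprob, hac, hllr⟩ := hF _ (hρtildeF ω)
    have := integral_norm_sub_sq_le_of_klDiv'_gibbs_le hmmeas hm_bdd hβ hac hρn_ac hllr
      hρn_llr (μhat := μhat ω) (hρtilde ω ρn hρnF) μ0 θs
    linarith [show (6 : ℝ) / n = 4 * (1 / n) + 2 * (1 / n) by ring]
  have hμhat_int : Integrable (fun ω => ‖μhat ω - μ0‖ ^ 2) ℙ :=
    integrable_norm_sub_sq (by fun_prop)
      (fun ω => norm_inv_natCast_smul_sum_le hn fun i => hΦbdd (X i ω)) μ0
  have hconc : ∫ ω, ‖μhat ω - μ0‖ ^ 2 ∂ℙ ≤ 1 / n := by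
    simpa [hμ0] using integral_norm_inv_smul_sum_sub_sq_le hn (fun i => (hXmeas i).aemeasurable)
      hiid hlaw hΦmeas.aestronglyMeasurable hΦbdd
  have : Nonempty Θ := ⟨θs⟩
  have hinf : ⨅ θ, ‖m θ - μ0‖ ^ 2 = ‖m θs - μ0‖ ^ 2 :=
    ciInf_eq_of_forall_ge_of_forall_gt_exists_lt
      (fun θ => pow_le_pow_left₀ (norm_nonneg _) (hθs θ) 2) fun _ hw => ⟨θs, hw⟩
  calc ∫ ω, ∫ θ, ‖m θ - μ0‖ ^ 2 ∂(ρtilde ω) ∂ℙ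
      ≤ 6 / n + 8 * ‖m θs - μ0‖ ^ 2 + 10 * ∫ ω, ‖μhat ω - μ0‖ ^ 2 ∂ℙ :=
        integral_le_const_add_mul_integral (fun ω => integral_nonneg fun θ => by positivity)
          hμhat_int hpointwise
    _ ≤ 8 * (⨅ θ, ‖m θ - μ0‖ ^ 2) + 16 / n := by
        rw [hinf]
        linarith [show (16 : ℝ) / n = 6 / n + 10 * (1 / n) by ring]
end
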